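/- For every quantum channel N, the constrained Holevo capacity is concave as a function of the input state: for all density matrices ρ1, ρ2 on the input space of N and all t ∈ [0,1], χ_N(t ρ1 + (1−t) ρ2) ≥ t χ_N(ρ1) + (1−t) χ_N(ρ2). -/

import Mathlib

open scoped Kronecker Matrix ComplexOrder

noncomputable section

/-- The von Neumann entropy `H(ρ) = -∑ᵢ λᵢ log λᵢ` of a Hermitian matrix,
where the `λᵢ` are its eigenvalues (with the convention `0 log 0 = 0`,
which holds automatically since `Real.log 0 = 0`). -/
def vNEntropy {n : Type} [Fintype n] [DecidableEq n] (ρ : Matrix n n ℂ) : ℝ :=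
  if h : ρ.IsHermitian then -∑ i, h.eigenvalues i * Real.log (h.eigenvalues i) else 0

/-- A density matrix: positive semidefinite with trace 1. -/
def IsDensityMatrix {n : Type} [Fintype n] [DecidableEq n] (ρ : Matrix n n ℂ) : Prop :=
  ρ.PosSemidef ∧ ρ.trace = 1

/-- The rank-one matrix `|v⟩⟨v|`. -/
def outer {n : Type} [Fintype n] (v : n → ℂ) : Matrix n n ℂ :=
  Matrix.vecMulVec v (star v)

/-- A unit vector. -/
def IsUnitVec {n : Type} [Fintype n] (v : n → ℂ) : Prop :=
  ∑ a, ‖v a‖ ^ 2 = 1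

/-- A quantum channel, given by a finite family of Kraus operators `A k`
satisfying the completeness relation `∑ k, (A k)ᴴ * A k = 1`. -/
structure QChannel (I O : Type) [Fintype I] [DecidableEq I] [Fintype O] [DecidableEq O] :
    Type 1 where
  ι : Type
  [instFintype : Fintype ι]
  A : ι → Matrix O I ℂ
  complete : ∑ k, (A k)ᴴ * A k = 1

attribute [instance] QChannel.instFintype

/-- The action `N(ρ) = ∑ₖ Aₖ ρ Aₖᴴ` of a channel on a matrix. -/
def QChannel.app {I O : Type} [Fintype I] [DecidableEq I] [Fintype O] [DecidableEq O]
    (N : QChannel I O) (ρ : Matrix I I ℂ) : Matrix O O ℂ :=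
  ∑ k, N.A k * ρ * (N.A k)ᴴ

theorem kronecker_conjT {l m n p : Type} (A : Matrix l m ℂ) (B : Matrix n p ℂ) :
    (A ⊗ₖ B)ᴴ = Aᴴ ⊗ₖ Bᴴ := by
  ext ⟨i, j⟩ ⟨k, s⟩
  simp [Matrix.conjTranspose_apply, mul_comm]

theorem sum_kronecker_sum {ι₁ ι₂ l m n p : Type} [Fintype ι₁] [Fintype ι₂]
    (A : ι₁ → Matrix l m ℂ) (B : ι₂ → Matrix n p ℂ) :
    (∑ i, A i) ⊗ₖ (∑ j, B j) = ∑ k : ι₁ × ι₂, A k.1 ⊗ₖ B k.2 := by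
  ext ⟨x, y⟩ ⟨x', y'⟩
  simp only [Matrix.sum_apply, Matrix.kroneckerMap_apply, Finset.sum_mul_sum]
  exact (Fintype.sum_prod_type (fun k : ι₁ × ι₂ => A k.1 x x' * B k.2 y y')).symm

/-- The tensor-product channel `N₁ ⊗ N₂`: its Kraus operators are the Kronecker
products of the Kraus operators of the two factors. -/
def QChannel.prod {I₁ O₁ I₂ O₂ : Type}
    [Fintype I₁] [DecidableEq I₁] [Fintype O₁] [DecidableEq O₁]
    [Fintype I₂] [DecidableEq I₂] [Fintype O₂] [DecidableEq O₂]
    (N₁ : QChannel I₁ O₁) (N₂ : QChannel I₂ O₂) : QChannel (I₁ × I₂) (O₁ × O₂) where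
  ι := N₁.ι × N₂.ι
  A := fun k => N₁.A k.1 ⊗ₖ N₂.A k.2
  complete := by
    have h1 : ∀ k : N₁.ι × N₂.ι, (N₁.A k.1 ⊗ₖ N₂.A k.2)ᴴ * (N₁.A k.1 ⊗ₖ N₂.A k.2)
        = ((N₁.A k.1)ᴴ * N₁.A k.1) ⊗ₖ ((N₂.A k.2)ᴴ * N₂.A k.2) := fun k => by
      rw [kronecker_conjT, Matrix.mul_kronecker_mul]
    rw [Finset.sum_congr rfl fun k _ => h1 k,
      ← sum_kronecker_sum (fun k₁ => (N₁.A k₁)ᴴ * N₁.A k₁) (fun k₂ => (N₂.A k₂)ᴴ * N₂.A k₂),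
      N₁.complete, N₂.complete, Matrix.one_kronecker_one]

/-- The minimum output entropy of a channel: the minimum of `H(N(|v⟩⟨v|))`
over unit vectors `v` in the input space. -/
def minOutEntropy {I O : Type} [Fintype I] [DecidableEq I] [Fintype O] [DecidableEq O]
    (N : QChannel I O) : ℝ :=
  sInf { x | ∃ v : I → ℂ, IsUnitVec v ∧ x = vNEntropy (N.app (outer v)) }

/-- The Holevo capacity `χ_N` of a channel. -/
def holevoCap {I O : Type} [Fintype I] [DecidableEq I] [Fintype O] [DecidableEq O]
    (N : QChannel I O) : ℝ :=
  sSup { x | ∃ (n : ℕ) (p : Fin n → ℝ) (v : Fin n → I → ℂ),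
    (∀ i, 0 ≤ p i) ∧ (∑ i, p i = 1) ∧ (∀ i, IsUnitVec (v i)) ∧
    x = vNEntropy (N.app (∑ i, (p i : ℂ) • outer (v i))) -
      ∑ i, p i * vNEntropy (N.app (outer (v i))) }

/-- The constrained Holevo capacity `χ_N(ρ)`: only ensembles averaging to `ρ` are allowed. -/
def cHolevoCap {I O : Type} [Fintype I] [DecidableEq I] [Fintype O] [DecidableEq O]
    (N : QChannel I O) (ρ : Matrix I I ℂ) : ℝ :=
  sSup { x | ∃ (n : ℕ) (p : Fin n → ℝ) (v : Fin n → I → ℂ),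
    (∀ i, 0 ≤ p i) ∧ (∑ i, p i = 1) ∧ (∀ i, IsUnitVec (v i)) ∧
    (∑ i, (p i : ℂ) • outer (v i)) = ρ ∧
    x = vNEntropy (N.app ρ) - ∑ i, p i * vNEntropy (N.app (outer (v i))) }

/-- Partial trace over the second (B) factor of a bipartite matrix. -/
def traceB {A B : Type} [Fintype B] (σ : Matrix (A × B) (A × B) ℂ) : Matrix A A ℂ :=
  Matrix.of fun a a' => ∑ b, σ (a, b) (a', b)

/-- The entanglement of formation of a bipartite state on `A ⊗ B`. -/
def entF {A B : Type} [Fintype A] [DecidableEq A] [Fintype B] [DecidableEq B]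
    (σ : Matrix (A × B) (A × B) ℂ) : ℝ :=
  sInf { x | ∃ (n : ℕ) (p : Fin n → ℝ) (v : Fin n → A × B → ℂ),
    (∀ i, 0 ≤ p i) ∧ (∀ i, IsUnitVec (v i)) ∧
    (∑ i, (p i : ℂ) • outer (v i)) = σ ∧
    x = ∑ i, p i * vNEntropy (traceB (outer (v i))) }

/-- The tensor product of two bipartite states `σ₁` on `A₁ ⊗ B₁` and `σ₂` on `A₂ ⊗ B₂`
(Kronecker product), reindexed as a bipartite state with A-part `A₁ ⊗ A₂` and
B-part `B₁ ⊗ B₂`. -/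
def pairTensor {A₁ B₁ A₂ B₂ : Type}
    (σ₁ : Matrix (A₁ × B₁) (A₁ × B₁) ℂ) (σ₂ : Matrix (A₂ × B₂) (A₂ × B₂) ℂ) :
    Matrix ((A₁ × A₂) × (B₁ × B₂)) ((A₁ × A₂) × (B₁ × B₂)) ℂ :=
  Matrix.of fun x y =>
    σ₁ (x.1.1, x.2.1) (y.1.1, y.2.1) * σ₂ (x.1.2, x.2.2) (y.1.2, y.2.2)

/-- Trace out the second subsystem (`A₂` and `B₂`) of a quadripartite state. -/
def trace2 {A₁ A₂ B₁ B₂ : Type} [Fintype A₂] [Fintype B₂]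
    (σ : Matrix ((A₁ × A₂) × (B₁ × B₂)) ((A₁ × A₂) × (B₁ × B₂)) ℂ) :
    Matrix (A₁ × B₁) (A₁ × B₁) ℂ :=
  Matrix.of fun x y => ∑ a₂, ∑ b₂, σ ((x.1, a₂), (x.2, b₂)) ((y.1, a₂), (y.2, b₂))

/-- Trace out the first subsystem (`A₁` and `B₁`) of a quadripartite state. -/
def trace1 {A₁ A₂ B₁ B₂ : Type} [Fintype A₁] [Fintype B₁]
    (σ : Matrix ((A₁ × A₂) × (B₁ × B₂)) ((A₁ × A₂) × (B₁ × B₂)) ℂ) :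
    Matrix (A₂ × B₂) (A₂ × B₂) ℂ :=
  Matrix.of fun x y => ∑ a₁, ∑ b₁, σ ((a₁, x.1), (b₁, x.2)) ((a₁, y.1), (b₁, y.2))

/-!
Splicing an ensemble for `ρ₁` (with weight `t`) and one for `ρ₂` (with weight `1 - t`) gives an
ensemble for the mixture whose average output entropy is the mixture of the two; since `N` is
linear, concavity of `χ_N` thus reduces to concavity of the von Neumann entropy. For the latter,
read every state in the eigenbasis of the mixture: for a unitary `W` the matrix `|Wᵢⱼ|²` is doubly
stochastic, so by Jensen for `x ↦ -x log x` the entropy of a state is at most that of its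
diagonal, while the diagonals mix linearly and the diagonal of the mixture is its spectrum.
-/

open Matrix Real
open scoped Pointwise

lemma Matrix.PosSemidef.convexComb {n : Type} {σ₁ σ₂ : Matrix n n ℂ} (h₁ : σ₁.PosSemidef)
    (h₂ : σ₂.PosSemidef) {t : ℝ} (ht₀ : 0 ≤ t) (ht₁ : t ≤ 1) :
    ((t : ℂ) • σ₁ + ((1 - t : ℝ) : ℂ) • σ₂).PosSemidef :=
  (h₁.smul (by exact_mod_cast ht₀)).add (h₂.smul (by exact_mod_cast sub_nonneg.2 ht₁))

section Entropy

variable {n : Type} [Fintype n] [DecidableEq n]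

lemma ConcaveOn.sum_le_sum_mulVec {s : Set ℝ} {f : ℝ → ℝ} (hf : ConcaveOn ℝ s f)
    {B : Matrix n n ℝ} (hB : B ∈ doublyStochastic ℝ n) {x : n → ℝ} (hx : ∀ j, x j ∈ s) :
    ∑ j, f (x j) ≤ ∑ i, f ((B *ᵥ x) i) := by
  obtain ⟨hB0, hrow, hcol⟩ := mem_doublyStochastic_iff_sum.1 hB
  calc ∑ j, f (x j) = ∑ i, ∑ j, B i j • f (x j) := by
        rw [Finset.sum_comm]
        simp_rw [← Finset.sum_smul, hcol, one_smul]
    _ ≤ ∑ i, f ((B *ᵥ x) i) := Finset.sum_le_sum fun i _ =>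
        hf.le_map_sum (fun j _ => hB0 i j) (hrow i) fun j _ => hx j

lemma Matrix.sum_normSq_row_eq_one {U : Matrix n n ℂ} (hU : U ∈ unitaryGroup n ℂ) (i : n) :
    ∑ j, Complex.normSq (U i j) = 1 := by
  have h := congrFun₂ (mem_unitaryGroup_iff.1 hU) i i
  simp only [mul_apply, star_apply, one_apply_eq, Complex.star_def, Complex.mul_conj] at h
  exact_mod_cast h

lemma Matrix.normSq_mem_doublyStochastic {U : Matrix n n ℂ} (hU : U ∈ unitaryGroup n ℂ) :
    Matrix.of (fun i j => Complex.normSq (U i j)) ∈ doublyStochastic ℝ n := by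
  refine mem_doublyStochastic_iff_sum.2
    ⟨fun i j => Complex.normSq_nonneg _, sum_normSq_row_eq_one hU, fun j => ?_⟩
  simpa [Complex.normSq_conj] using
    sum_normSq_row_eq_one (Unitary.star_mem hU) j

lemma Matrix.mul_diagonal_mul_star_apply_self (W : Matrix n n ℂ) (d : n → ℝ) (i : n) :
    (W * diagonal (fun j => (d j : ℂ)) * star W) i i = ∑ j, Complex.normSq (W i j) * d j := by
  simp only [mul_apply, diagonal_apply, mul_ite, mul_zero, Finset.sum_ite_eq', Finset.mem_univ,
    if_true, star_apply, Complex.star_def]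
  push_cast
  refine Finset.sum_congr rfl fun j _ => ?_
  rw [← Complex.mul_conj]
  ring

lemma vNEntropy_eq_sum_negMulLog {ρ : Matrix n n ℂ} (h : ρ.IsHermitian) :
    vNEntropy ρ = ∑ i, negMulLog (h.eigenvalues i) := by
  simp only [vNEntropy, dif_pos h, negMulLog, neg_mul, Finset.sum_neg_distrib]

lemma Matrix.IsHermitian.conj_eq_mul_diagonal_mul_star {A : Matrix n n ℂ} (hA : A.IsHermitian)
    (U : Matrix n n ℂ) :
    star U * A * U = (star U * hA.eigenvectorUnitary) *
      diagonal (fun j => (hA.eigenvalues j : ℂ)) * star (star U * hA.eigenvectorUnitary) := by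
  conv_lhs => rw [hA.spectral_theorem, Unitary.conjStarAlgAut_apply]
  simp only [star_mul, star_star, Matrix.mul_assoc]
  rfl

lemma vNEntropy_le_sum_negMulLog_diag {A : Matrix n n ℂ} (hA : A.PosSemidef)
    {U : Matrix n n ℂ} (hU : U ∈ unitaryGroup n ℂ) :
    vNEntropy A ≤ ∑ i, negMulLog ((star U * A * U) i i).re := by
  set W := star U * (hA.1.eigenvectorUnitary : Matrix n n ℂ)
  have hW : W ∈ unitaryGroup n ℂ := mul_mem (Unitary.star_mem hU) hA.1.eigenvectorUnitary.2
  have hdiag : ∀ i, ((star U * A * U) i i).re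
      = (Matrix.of (fun i j => Complex.normSq (W i j)) *ᵥ hA.1.eigenvalues) i := fun i => by
    rw [hA.1.conj_eq_mul_diagonal_mul_star, mul_diagonal_mul_star_apply_self]
    simp [mulVec, dotProduct, W]
  rw [vNEntropy_eq_sum_negMulLog hA.1]
  simp_rw [hdiag]
  exact concaveOn_negMulLog.sum_le_sum_mulVec (normSq_mem_doublyStochastic hW)
    hA.eigenvalues_nonneg

lemma IsDensityMatrix.sum_eigenvalues {ρ : Matrix n n ℂ} (h : IsDensityMatrix ρ) :
    ∑ i, h.1.1.eigenvalues i = 1 := by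
  simpa using congrArg Complex.re (h.1.1.trace_eq_sum_eigenvalues.symm.trans h.2)

lemma vNEntropy_nonneg {ρ : Matrix n n ℂ} (h : IsDensityMatrix ρ) : 0 ≤ vNEntropy ρ := by
  rw [vNEntropy_eq_sum_negMulLog h.1.1]
  refine Finset.sum_nonneg fun i _ => negMulLog_nonneg (h.1.eigenvalues_nonneg i) ?_
  calc h.1.1.eigenvalues i ≤ ∑ j, h.1.1.eigenvalues j :=
        Finset.single_le_sum (fun j _ => h.1.eigenvalues_nonneg j) (Finset.mem_univ i)
    _ = 1 := h.sum_eigenvalues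

theorem vNEntropy_concave {σ₁ σ₂ : Matrix n n ℂ} (h₁ : σ₁.PosSemidef) (h₂ : σ₂.PosSemidef)
    {t : ℝ} (ht₀ : 0 ≤ t) (ht₁ : t ≤ 1) :
    t * vNEntropy σ₁ + (1 - t) * vNEntropy σ₂ ≤
      vNEntropy ((t : ℂ) • σ₁ + ((1 - t : ℝ) : ℂ) • σ₂) := by
  have hσ := h₁.convexComb h₂ ht₀ ht₁
  set U : Matrix n n ℂ := ↑hσ.1.eigenvectorUnitary
  have hU : U ∈ unitaryGroup n ℂ := hσ.1.eigenvectorUnitary.2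
  set d : Matrix n n ℂ → n → ℝ := fun τ i => ((star U * τ * U) i i).re
  have hd : ∀ {τ : Matrix n n ℂ}, τ.PosSemidef → ∀ i, 0 ≤ d τ i := fun hτ i =>
    Complex.nonneg_iff.1 (hτ.conjTranspose_mul_mul_same U).diag_nonneg |>.1
  have heig : ∀ i, hσ.1.eigenvalues i = t * d σ₁ i + (1 - t) * d σ₂ i := fun i => by
    have h := congrFun₂ hσ.1.conjStarAlgAut_star_eigenvectorUnitary i i
    simp only [Unitary.conjStarAlgAut_star_apply, diagonal_apply_eq,
      Function.comp_apply, Matrix.mul_add, Matrix.add_mul, Matrix.mul_smul, Matrix.smul_mul,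
      Matrix.add_apply, Matrix.smul_apply, smul_eq_mul] at h
    simpa [d, U, Complex.mul_re] using (congrArg Complex.re h).symm
  calc t * vNEntropy σ₁ + (1 - t) * vNEntropy σ₂
      ≤ t * ∑ i, negMulLog (d σ₁ i) + (1 - t) * ∑ i, negMulLog (d σ₂ i) := by
        have := sub_nonneg.2 ht₁
        gcongr
        exacts [vNEntropy_le_sum_negMulLog_diag h₁ hU, vNEntropy_le_sum_negMulLog_diag h₂ hU]
    _ = ∑ i, (t • negMulLog (d σ₁ i) + (1 - t) • negMulLog (d σ₂ i)) := by
        simp only [smul_eq_mul, Finset.mul_sum, Finset.sum_add_distrib]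
    _ ≤ ∑ i, negMulLog (t • d σ₁ i + (1 - t) • d σ₂ i) := Finset.sum_le_sum fun i _ =>
        concaveOn_negMulLog.2 (hd h₁ i) (hd h₂ i) ht₀ (sub_nonneg.2 ht₁) (by ring)
    _ = _ := by
        simp only [smul_eq_mul, ← heig]
        exact (vNEntropy_eq_sum_negMulLog hσ.1).symm

end Entropy

section Channels

variable {I O : Type} [Fintype I] [DecidableEq I] [Fintype O] [DecidableEq O]

lemma isDensityMatrix_outer {v : I → ℂ} (hv : IsUnitVec v) : IsDensityMatrix (outer v) := by
  refine ⟨posSemidef_vecMulVec_self_star v, ?_⟩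
  rw [outer, trace_vecMulVec, ← Complex.ofReal_one, ← hv]
  push_cast
  refine Finset.sum_congr rfl fun a _ => ?_
  rw [Pi.star_apply, Complex.star_def, Complex.mul_conj, Complex.normSq_eq_norm_sq]
  push_cast
  rfl

namespace QChannel

variable (N : QChannel I O)

lemma app_add (ρ σ : Matrix I I ℂ) : N.app (ρ + σ) = N.app ρ + N.app σ := by
  simp only [app, Matrix.mul_add, Matrix.add_mul, Finset.sum_add_distrib]

lemma app_smul (c : ℂ) (ρ : Matrix I I ℂ) : N.app (c • ρ) = c • N.app ρ := by
  simp only [app, Matrix.mul_smul, Matrix.smul_mul, Finset.smul_sum]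

lemma app_posSemidef {ρ : Matrix I I ℂ} (hρ : ρ.PosSemidef) : (N.app ρ).PosSemidef :=
  posSemidef_sum _ fun k _ => hρ.mul_mul_conjTranspose_same (N.A k)

lemma trace_app (ρ : Matrix I I ℂ) : (N.app ρ).trace = ρ.trace := by
  calc (N.app ρ).trace = (∑ k, (N.A k)ᴴ * N.A k * ρ).trace := by
        simp only [app, trace_sum, trace_mul_cycle _ ρ]
    _ = ρ.trace := by rw [← Finset.sum_mul, N.complete, Matrix.one_mul]

lemma app_isDensityMatrix {ρ : Matrix I I ℂ} (hρ : IsDensityMatrix ρ) :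
    IsDensityMatrix (N.app ρ) :=
  ⟨N.app_posSemidef hρ.1, (N.trace_app ρ).trans hρ.2⟩

end QChannel

end Channels

structure PureEnsemble (I : Type) [Fintype I] where
  n : ℕ
  p : Fin n → ℝ
  v : Fin n → I → ℂ
  p_nonneg : ∀ i, 0 ≤ p i
  sum_p : ∑ i, p i = 1
  isUnitVec : ∀ i, IsUnitVec (v i)

namespace PureEnsemble

section

variable {I : Type} [Fintype I]

def average (E : PureEnsemble I) : Matrix I I ℂ :=
  ∑ i, (E.p i : ℂ) • outer (E.v i)

def mix {t : ℝ} (ht₀ : 0 ≤ t) (ht₁ : t ≤ 1) (E₁ E₂ : PureEnsemble I) : PureEnsemble I where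
  n := E₁.n + E₂.n
  p := Fin.append (fun i => t * E₁.p i) (fun i => (1 - t) * E₂.p i)
  v := Fin.append E₁.v E₂.v
  p_nonneg := Fin.addCases (fun i => by simpa using mul_nonneg ht₀ (E₁.p_nonneg i))
    (fun i => by simpa using mul_nonneg (sub_nonneg.2 ht₁) (E₂.p_nonneg i))
  sum_p := by simp [Fin.sum_univ_add, ← Finset.mul_sum, E₁.sum_p, E₂.sum_p]
  isUnitVec := Fin.addCases (fun i => by simpa using E₁.isUnitVec i)
    (fun i => by simpa using E₂.isUnitVec i)

variable {t : ℝ} (ht₀ : 0 ≤ t) (ht₁ : t ≤ 1) (E₁ E₂ : PureEnsemble I)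

lemma average_mix :
    (mix ht₀ ht₁ E₁ E₂).average = (t : ℂ) • E₁.average + ((1 - t : ℝ) : ℂ) • E₂.average := by
  refine (Fin.sum_univ_add _).trans ?_
  simp only [mix, average, Fin.append_left, Fin.append_right, Finset.smul_sum, smul_smul]
  push_cast
  rfl

end

variable {I O : Type} [Fintype I] [DecidableEq I] [Fintype O] [DecidableEq O]

def avgOutputEntropy (N : QChannel I O) (E : PureEnsemble I) : ℝ :=
  ∑ i, E.p i * vNEntropy (N.app (outer (E.v i)))

lemma avgOutputEntropy_nonneg (N : QChannel I O) (E : PureEnsemble I) :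
    0 ≤ E.avgOutputEntropy N :=
  Finset.sum_nonneg fun i _ => mul_nonneg (E.p_nonneg i)
    (vNEntropy_nonneg (N.app_isDensityMatrix (isDensityMatrix_outer (E.isUnitVec i))))

def spectral {ρ : Matrix I I ℂ} (hρ : IsDensityMatrix ρ) : PureEnsemble I where
  n := Fintype.card I
  p i := hρ.1.1.eigenvalues ((Fintype.equivFin I).symm i)
  v i a := (hρ.1.1.eigenvectorUnitary : Matrix I I ℂ) a ((Fintype.equivFin I).symm i)
  p_nonneg i := hρ.1.eigenvalues_nonneg _
  sum_p := by rw [Equiv.sum_comp, hρ.sum_eigenvalues]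
  isUnitVec i := by
    simpa [IsUnitVec, Complex.normSq_eq_norm_sq] using sum_col_of_mem_doublyStochastic
      (normSq_mem_doublyStochastic hρ.1.1.eigenvectorUnitary.2) ((Fintype.equivFin I).symm i)

lemma average_spectral {ρ : Matrix I I ℂ} (hρ : IsDensityMatrix ρ) :
    (spectral hρ).average = ρ := by
  set U : Matrix I I ℂ := ↑hρ.1.1.eigenvectorUnitary
  have hreindex : (spectral hρ).average =
      ∑ j, (hρ.1.1.eigenvalues j : ℂ) • outer (fun a => U a j) :=
    Fintype.sum_equiv (Fintype.equivFin I).symm _ _ fun _ => rfl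
  rw [hreindex]
  ext a b
  conv_rhs => rw [hρ.1.1.spectral_theorem, Unitary.conjStarAlgAut_apply]
  rw [mul_apply]
  simp only [Matrix.sum_apply, Matrix.smul_apply, outer, vecMulVec_apply, mul_diagonal,
    star_apply, Pi.star_apply, smul_eq_mul, Function.comp_apply]
  refine Finset.sum_congr rfl fun j _ => ?_
  simp only [IsHermitian.eigenvectorUnitary_apply, RCLike.star_def, Complex.coe_algebraMap, U]
  ring

variable {t : ℝ} (ht₀ : 0 ≤ t) (ht₁ : t ≤ 1) (E₁ E₂ : PureEnsemble I)

lemma avgOutputEntropy_mix (N : QChannel I O) :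
    (mix ht₀ ht₁ E₁ E₂).avgOutputEntropy N =
      t * E₁.avgOutputEntropy N + (1 - t) * E₂.avgOutputEntropy N := by
  refine (Fin.sum_univ_add _).trans ?_
  simp [mix, avgOutputEntropy, Finset.mul_sum, mul_assoc]

end PureEnsemble

section HolevoQuantities

variable {I O : Type} [Fintype I] [DecidableEq I] [Fintype O] [DecidableEq O]

def holevoQuantities (N : QChannel I O) (ρ : Matrix I I ℂ) : Set ℝ :=
  {x | ∃ E : PureEnsemble I, E.average = ρ ∧ x = vNEntropy (N.app ρ) - E.avgOutputEntropy N}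

lemma cHolevoCap_eq_sSup (N : QChannel I O) (ρ : Matrix I I ℂ) :
    cHolevoCap N ρ = sSup (holevoQuantities N ρ) := by
  refine congrArg sSup (Set.ext fun x => ⟨?_, ?_⟩)
  · rintro ⟨n, p, v, hp, hsum, hv, havg, rfl⟩
    exact ⟨⟨n, p, v, hp, hsum, hv⟩, havg, rfl⟩
  · rintro ⟨⟨n, p, v, hp, hsum, hv⟩, havg, rfl⟩
    exact ⟨n, p, v, hp, hsum, hv, havg, rfl⟩

lemma holevoQuantities_bddAbove (N : QChannel I O) (ρ : Matrix I I ℂ) :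
    BddAbove (holevoQuantities N ρ) := by
  refine ⟨vNEntropy (N.app ρ), ?_⟩
  rintro _ ⟨E, -, rfl⟩
  linarith [E.avgOutputEntropy_nonneg N]

lemma holevoQuantities_nonempty (N : QChannel I O) {ρ : Matrix I I ℂ}
    (hρ : IsDensityMatrix ρ) : (holevoQuantities N ρ).Nonempty :=
  ⟨_, PureEnsemble.spectral hρ, PureEnsemble.average_spectral hρ, rfl⟩

lemma exists_mem_holevoQuantities_convexComb_ge (N : QChannel I O) {ρ₁ ρ₂ : Matrix I I ℂ}
    (hρ₁ : ρ₁.PosSemidef) (hρ₂ : ρ₂.PosSemidef) {t : ℝ} (ht₀ : 0 ≤ t) (ht₁ : t ≤ 1)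
    {x₁ x₂ : ℝ} (hx₁ : x₁ ∈ holevoQuantities N ρ₁) (hx₂ : x₂ ∈ holevoQuantities N ρ₂) :
    ∃ x ∈ holevoQuantities N ((t : ℂ) • ρ₁ + ((1 - t : ℝ) : ℂ) • ρ₂),
      t * x₁ + (1 - t) * x₂ ≤ x := by
  obtain ⟨E₁, rfl, rfl⟩ := hx₁
  obtain ⟨E₂, rfl, rfl⟩ := hx₂
  refine ⟨_, ⟨PureEnsemble.mix ht₀ ht₁ E₁ E₂, PureEnsemble.average_mix .., rfl⟩, ?_⟩
  have hconc := vNEntropy_concave (N.app_posSemidef hρ₁) (N.app_posSemidef hρ₂) ht₀ ht₁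
  rw [PureEnsemble.avgOutputEntropy_mix, N.app_add, N.app_smul, N.app_smul]
  linarith

end HolevoQuantities

/-- The constrained Holevo capacity `χ_N(ρ)` is concave in the input state `ρ`. -/
theorem cHolevoCap_concave {dI dO : ℕ} (N : QChannel (Fin dI) (Fin dO))
    (ρ₁ ρ₂ : Matrix (Fin dI) (Fin dI) ℂ)
    (hρ₁ : IsDensityMatrix ρ₁) (hρ₂ : IsDensityMatrix ρ₂)
    (t : ℝ) (ht₀ : 0 ≤ t) (ht₁ : t ≤ 1) :
    cHolevoCap N ((t : ℂ) • ρ₁ + ((1 - t : ℝ) : ℂ) • ρ₂) ≥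
      t * cHolevoCap N ρ₁ + (1 - t) * cHolevoCap N ρ₂ := by
  set S₁ := holevoQuantities N ρ₁
  set S₂ := holevoQuantities N ρ₂
  have hne₁ : S₁.Nonempty := holevoQuantities_nonempty N hρ₁
  have hne₂ : S₂.Nonempty := holevoQuantities_nonempty N hρ₂
  have ht : 0 ≤ 1 - t := sub_nonneg.2 ht₁
  have hsup : t * sSup S₁ + (1 - t) * sSup S₂ = sSup (t • S₁ + (1 - t) • S₂) := by
    rw [csSup_add hne₁.smul_set ((holevoQuantities_bddAbove N ρ₁).smul_of_nonneg ht₀)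
      hne₂.smul_set ((holevoQuantities_bddAbove N ρ₂).smul_of_nonneg ht),
      Real.sSup_smul_of_nonneg ht₀, Real.sSup_smul_of_nonneg ht, smul_eq_mul, smul_eq_mul]
  rw [cHolevoCap_eq_sSup, cHolevoCap_eq_sSup, cHolevoCap_eq_sSup, ge_iff_le, hsup]
  refine csSup_le (hne₁.smul_set.add hne₂.smul_set) ?_
  rintro _ ⟨_, ⟨x₁, hx₁, rfl⟩, _, ⟨x₂, hx₂, rfl⟩, rfl⟩
  obtain ⟨x, hx, hle⟩ :=
    exists_mem_holevoQuantities_convexComb_ge N hρ₁.1 hρ₂.1 ht₀ ht₁ hx₁ hx₂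
  exact hle.trans (le_csSup (holevoQuantities_bddAbove N _) hx)

end
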